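/- arXiv:2512.13385 — 10 statements merged into one kernel-verified Lean document; each statement's English description precedes it below -/
import Mathlib

section
/- Let c ∈ ℝ₊ⁿ, E ∈ ℝ₊ with E < ∑ cᵢ (strict inequality), and let r ∈ ℝ₊ⁿ satisfy ∑ rᵢ = E. If λ₁, λ₂ ≥ 0 both satisfy ∑ᵢ min{cᵢ, rᵢ + λ} = E, then λ₁ = λ₂. -/
open Finset

section TruncatedSum

variable {ι M : Type*} [AddCommMonoid M] [LinearOrder M] [IsOrderedCancelAddMonoid M]

/-- Below the cap `∑ c`, some agent is not yet capped, so raising `l` strictly raises its share. -/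
theorem sum_min_add_lt_sum_min_add {s : Finset ι} {c r : ι → M} {l₁ l₂ : M} (hl : l₁ < l₂)
    (hcap : ∑ i ∈ s, min (c i) (r i + l₁) < ∑ i ∈ s, c i) :
    ∑ i ∈ s, min (c i) (r i + l₁) < ∑ i ∈ s, min (c i) (r i + l₂) := by
  obtain ⟨j, hj, hjc⟩ := exists_lt_of_sum_lt hcap
  have hrl : ∀ i, r i + l₁ < r i + l₂ := fun i => add_lt_add_right hl (r i)
  have hjr : r j + l₁ < c j := by simpa using hjc
  refine sum_lt_sum (fun i _ => min_le_min le_rfl (hrl i).le) ⟨j, hj, ?_⟩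
  rw [min_eq_right hjr.le]
  exact lt_min hjr (hrl j)

theorem strictMonoOn_sum_min_add (s : Finset ι) (c r : ι → M) :
    StrictMonoOn (fun l => ∑ i ∈ s, min (c i) (r i + l))
      {l | ∑ i ∈ s, min (c i) (r i + l) < ∑ i ∈ s, c i} :=
  fun _ hl₁ _ _ hl => sum_min_add_lt_sum_min_add hl hl₁

end TruncatedSum

theorem historical_lambda_unique_general (n : ℕ) (c r : Fin n → ℝ) (E : ℝ)
    (hEC : E < ∑ i, c i)
    (l₁ l₂ : ℝ)
    (h₁ : ∑ i, min (c i) (r i + l₁) = E)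
    (h₂ : ∑ i, min (c i) (r i + l₂) = E) :
    l₁ = l₂ :=
  (strictMonoOn_sum_min_add univ c r).injOn (by simpa [h₁] using hEC) (by simpa [h₂] using hEC)
    (h₁.trans h₂.symm)

theorem historical_lambda_unique (n : ℕ) (c r : Fin n → ℝ) (E : ℝ)
    (hc : ∀ i, 0 ≤ c i) (hE0 : 0 ≤ E) (hEC : E < ∑ i, c i)
    (hr : ∀ i, 0 ≤ r i) (hrsum : ∑ i, r i = E)
    (l₁ l₂ : ℝ) (hl₁ : 0 ≤ l₁) (hl₂ : 0 ≤ l₂)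
    (h₁ : ∑ i, min (c i) (r i + l₁) = E)
    (h₂ : ∑ i, min (c i) (r i + l₂) = E) :
    l₁ = l₂ :=
  historical_lambda_unique_general n c r E hEC l₁ l₂ h₁ h₂
end

section
/- Let c ∈ ℝ₊ⁿ, E ∈ ℝ₊ with E ≤ ∑ cᵢ, and let r ∈ ℝ₊ⁿ satisfy ∑ rᵢ = E. If λ₁, λ₂ ≥ 0 both satisfy ∑ᵢ min{cᵢ, rᵢ + λ} = E, then min{cᵢ, rᵢ + λ₁} = min{cᵢ, rᵢ + λ₂} for every i. That is, the allocation produced by the historical operator is unique even if λ is not. -/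
/-! Each allocation `min (c i) (r i + λ)` is monotone in `λ`, so between two values of `λ` no
coordinate can decrease; if the totals agree, no coordinate can increase either. -/

open Finset

theorem Finset.eq_of_sum_eq_of_monotone {ι α M : Type*} [LinearOrder α] [AddCommMonoid M]
    [PartialOrder M] [IsOrderedCancelAddMonoid M] {s : Finset ι} {f : ι → α → M}
    (hf : ∀ i ∈ s, Monotone (f i)) {a b : α} (h : ∑ i ∈ s, f i a = ∑ i ∈ s, f i b) :
    ∀ i ∈ s, f i a = f i b := by
  wlog hab : a ≤ b generalizing a b
  · exact fun i hi => (this h.symm (le_of_not_ge hab) i hi).symm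
  exact (sum_eq_sum_iff_of_le fun i hi => hf i hi hab).mp h

theorem historical_allocation_unique_general (n : ℕ) (c r : Fin n → ℝ) (E : ℝ)
    (l₁ l₂ : ℝ)
    (h₁ : ∑ i, min (c i) (r i + l₁) = E)
    (h₂ : ∑ i, min (c i) (r i + l₂) = E) :
    ∀ i, min (c i) (r i + l₁) = min (c i) (r i + l₂) := by
  have hmono : ∀ i ∈ univ, Monotone fun l => min (c i) (r i + l) :=
    fun i _ _ _ hl => min_le_min_left _ (by linarith)
  exact fun i => eq_of_sum_eq_of_monotone hmono (h₁.trans h₂.symm) i (mem_univ i)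

theorem historical_allocation_unique (n : ℕ) (c r : Fin n → ℝ) (E : ℝ)
    (hc : ∀ i, 0 ≤ c i) (hE0 : 0 ≤ E) (hEC : E ≤ ∑ i, c i)
    (hr : ∀ i, 0 ≤ r i) (hrsum : ∑ i, r i = E)
    (l₁ l₂ : ℝ) (hl₁ : 0 ≤ l₁) (hl₂ : 0 ≤ l₂)
    (h₁ : ∑ i, min (c i) (r i + l₁) = E)
    (h₂ : ∑ i, min (c i) (r i + l₂) = E) :
    ∀ i, min (c i) (r i + l₁) = min (c i) (r i + l₂) :=
  historical_allocation_unique_general n c r E l₁ l₂ h₁ h₂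
end

section
/- If a standard rule R satisfies order preservation in gains (larger claims receive at least as much), then the historically induced rule preserves it: for any historical claims problem and agents i, j with cᵢ ≥ cⱼ, Δᶜᵢ ≥ Δᶜⱼ and Δˣᵢ ≤ Δˣⱼ, the historical-operator allocation gives agent i at least as much as agent j. -/
/-- A standard rule: on each valid claims problem it yields a bounded, balanced allocation. -/
def IsRule (n : ℕ) (R : (Fin n → ℝ) → ℝ → (Fin n → ℝ)) : Prop :=
  ∀ c E, (∀ i, 0 ≤ c i) → 0 ≤ E → E ≤ ∑ i, c i →
    (∀ i, 0 ≤ R c E i ∧ R c E i ≤ c i) ∧ ∑ i, R c E i = E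

/-! The adjusted claims `c̃ = c + Δᶜ - Δˣ` dominate the claims and inherit their order from the
hypotheses, so order preservation of `R` on `(c̃, E)` gives `Rᵢ(c̃, E) ≥ Rⱼ(c̃, E)`; adding the
common `λ` and truncating at the ordered claims `cᵢ ≥ cⱼ` preserves the inequality. -/

section AdjustedClaims

variable {ι α : Type*} [AddCommGroup α] [PartialOrder α] [IsOrderedAddMonoid α]

theorem le_add_sum_sub_of_le (s : Finset ι) (a : α) {x y : ι → α}
    (h : ∀ t ∈ s, x t ≤ y t) : a ≤ a + ∑ t ∈ s, (y t - x t) :=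
  le_add_of_nonneg_right (Finset.sum_nonneg fun t ht => sub_nonneg.2 (h t ht))

theorem add_sum_sub_le_add_sum_sub (s : Finset ι) {a b : α} {x y x' y' : ι → α}
    (hab : b ≤ a) (hy : ∑ t ∈ s, y' t ≤ ∑ t ∈ s, y t) (hx : ∑ t ∈ s, x t ≤ ∑ t ∈ s, x' t) :
    b + ∑ t ∈ s, (y' t - x' t) ≤ a + ∑ t ∈ s, (y t - x t) := by
  rw [Finset.sum_sub_distrib, Finset.sum_sub_distrib]
  gcongr

end AdjustedClaims

theorem historical_preserves_order_preservation_in_gains_general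
    (n T : ℕ) (c : Fin n → ℝ) (E : ℝ)
    (hc : ∀ i, 0 ≤ c i) (hE0 : 0 ≤ E) (hEC : E ≤ ∑ i, c i)
    (ch xh : Fin T → Fin n → ℝ)
    (hhist : ∀ t i, 0 ≤ xh t i ∧ xh t i ≤ ch t i)
    (ctil : Fin n → ℝ)
    (hctil : ∀ i, ctil i = c i + ∑ t, (ch t i - xh t i))
    (R : (Fin n → ℝ) → ℝ → (Fin n → ℝ))
    (hOPG : ∀ c' E' i j, (∀ k, 0 ≤ c' k) → 0 ≤ E' → E' ≤ ∑ k, c' k →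
      c' i ≥ c' j → R c' E' i ≥ R c' E' j)
    (l : ℝ)
    (i j : Fin n) (hcij : c i ≥ c j)
    (hdc : ∑ t, ch t i ≥ ∑ t, ch t j)
    (hdx : ∑ t, xh t i ≤ ∑ t, xh t j) :
    min (c i) (R ctil E i + l) ≥ min (c j) (R ctil E j + l) := by
  have hc_le : ∀ k, c k ≤ ctil k := fun k =>
    (hctil k).symm ▸ le_add_sum_sub_of_le _ _ fun t _ => (hhist t k).2
  have hctil_ij : ctil i ≥ ctil j := by
    rw [hctil i, hctil j]
    exact add_sum_sub_le_add_sum_sub _ hcij hdc hdx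
  have hR_ij : R ctil E i ≥ R ctil E j :=
    hOPG ctil E i j (fun k => (hc k).trans (hc_le k)) hE0
      (hEC.trans (Finset.sum_le_sum fun k _ => hc_le k)) hctil_ij
  exact min_le_min hcij (add_le_add_left hR_ij l)

theorem historical_preserves_order_preservation_in_gains
    (n T : ℕ) (c : Fin n → ℝ) (E : ℝ)
    (hc : ∀ i, 0 ≤ c i) (hE0 : 0 ≤ E) (hEC : E ≤ ∑ i, c i)
    (ch xh : Fin T → Fin n → ℝ)
    (hhist : ∀ t i, 0 ≤ xh t i ∧ xh t i ≤ ch t i)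
    (ctil : Fin n → ℝ)
    (hctil : ∀ i, ctil i = c i + ∑ t, (ch t i - xh t i))
    (R : (Fin n → ℝ) → ℝ → (Fin n → ℝ)) (hR : IsRule n R)
    (hOPG : ∀ c' E' i j, (∀ k, 0 ≤ c' k) → 0 ≤ E' → E' ≤ ∑ k, c' k →
      c' i ≥ c' j → R c' E' i ≥ R c' E' j)
    (l : ℝ) (hl : 0 ≤ l)
    (hsum : ∑ i, min (c i) (R ctil E i + l) = E)
    (i j : Fin n) (hcij : c i ≥ c j)
    (hdc : ∑ t, ch t i ≥ ∑ t, ch t j)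
    (hdx : ∑ t, xh t i ≤ ∑ t, xh t j) :
    min (c i) (R ctil E i + l) ≥ min (c j) (R ctil E j + l) :=
  historical_preserves_order_preservation_in_gains_general n T c E hc hE0 hEC ch xh hhist ctil hctil
    R hOPG l i j hcij hdc hdx
end

section
/- If a standard rule R satisfies securement, then the historically induced rule satisfies securement: Φᵢ(R)(N,c,E,h) ≥ (1/n)·min{cᵢ, E} for every agent i. -/
/-!
Securement of `R` at the history-adjusted claims `c̃` already guarantees agent `i` at least
`(1/n) · min{c̃ᵢ, E} ≥ (1/n) · min{cᵢ, E}`, since outstanding debts only raise claims; adding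
`λ ≥ 0` keeps this bound. The cap `cᵢ` respects it too, as `(1/n) · min{cᵢ, E} ≤ cᵢ` for `n ≥ 1`.
-/

def SatisfiesSecurement (n : ℕ) (R : (Fin n → ℝ) → ℝ → (Fin n → ℝ)) : Prop :=
  ∀ c E i, (∀ k, 0 ≤ c k) → 0 ≤ E → E ≤ ∑ k, c k → R c E i ≥ (1 / (n : ℝ)) * min (c i) E

lemma one_div_natCast_mul_le_self {K : Type*} [Field K] [LinearOrder K] [IsStrictOrderedRing K]
    {n : ℕ} (hn : n ≠ 0) {x : K} (hx : 0 ≤ x) : 1 / (n : K) * x ≤ x := by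
  rw [one_div_mul_eq_div]
  exact div_le_self hx (by exact_mod_cast Nat.one_le_iff_ne_zero.mpr hn)

lemma le_add_sum_sub_of_le_s10 {ι M : Type*} [AddCommGroup M] [PartialOrder M]
    [IsOrderedAddMonoid M] (s : Finset ι) (a : M) {f g : ι → M} (hgf : ∀ t ∈ s, g t ≤ f t) :
    a ≤ a + ∑ t ∈ s, (f t - g t) :=
  le_add_of_nonneg_right (Finset.sum_nonneg fun t ht => sub_nonneg.mpr (hgf t ht))

lemma SatisfiesSecurement.le_apply_of_claims_le {n : ℕ} {R : (Fin n → ℝ) → ℝ → (Fin n → ℝ)}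
    (hSec : SatisfiesSecurement n R) {c c' : Fin n → ℝ} {E : ℝ} (hcc' : c ≤ c')
    (hc : ∀ k, 0 ≤ c k) (hE0 : 0 ≤ E) (hEC : E ≤ ∑ k, c k) (i : Fin n) :
    1 / (n : ℝ) * min (c i) E ≤ R c' E i :=
  calc 1 / (n : ℝ) * min (c i) E ≤ 1 / (n : ℝ) * min (c' i) E := by
        gcongr
        exact hcc' i
    _ ≤ R c' E i :=
        hSec c' E i (fun k => (hc k).trans (hcc' k)) hE0
          (hEC.trans (Finset.sum_le_sum fun k _ => hcc' k))

theorem historical_preserves_securement_general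
    (n T : ℕ) (c : Fin n → ℝ) (E : ℝ)
    (hc : ∀ i, 0 ≤ c i) (hE0 : 0 ≤ E) (hEC : E ≤ ∑ i, c i)
    (ch xh : Fin T → Fin n → ℝ)
    (hhist : ∀ t i, 0 ≤ xh t i ∧ xh t i ≤ ch t i)
    (ctil : Fin n → ℝ)
    (hctil : ∀ i, ctil i = c i + ∑ t, (ch t i - xh t i))
    (R : (Fin n → ℝ) → ℝ → (Fin n → ℝ))
    (hSec : ∀ c' E' i, (∀ k, 0 ≤ c' k) → 0 ≤ E' → E' ≤ ∑ k, c' k →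
      R c' E' i ≥ (1 / (n : ℝ)) * min (c' i) E')
    (l : ℝ) (hl : 0 ≤ l) :
    ∀ i, min (c i) (R ctil E i + l) ≥ (1 / (n : ℝ)) * min (c i) E := by
  intro i
  have hc_le_ctil : c ≤ ctil := fun k =>
    (hctil k).symm ▸ le_add_sum_sub_of_le_s10 _ _ fun t _ => (hhist t k).2
  refine le_min ?_ ?_
  · exact (one_div_natCast_mul_le_self i.pos.ne' (le_min (hc i) hE0)).trans (min_le_left _ _)
  · exact (SatisfiesSecurement.le_apply_of_claims_le hSec hc_le_ctil hc hE0 hEC i).trans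
      (le_add_of_nonneg_right hl)

theorem historical_preserves_securement
    (n T : ℕ) (c : Fin n → ℝ) (E : ℝ)
    (hc : ∀ i, 0 ≤ c i) (hE0 : 0 ≤ E) (hEC : E ≤ ∑ i, c i)
    (ch xh : Fin T → Fin n → ℝ)
    (hhist : ∀ t i, 0 ≤ xh t i ∧ xh t i ≤ ch t i)
    (ctil : Fin n → ℝ)
    (hctil : ∀ i, ctil i = c i + ∑ t, (ch t i - xh t i))
    (R : (Fin n → ℝ) → ℝ → (Fin n → ℝ)) (hR : IsRule n R)
    (hSec : ∀ c' E' i, (∀ k, 0 ≤ c' k) → 0 ≤ E' → E' ≤ ∑ k, c' k →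
      R c' E' i ≥ (1 / (n : ℝ)) * min (c' i) E')
    (l : ℝ) (hl : 0 ≤ l)
    (hsum : ∑ i, min (c i) (R ctil E i + l) = E) :
    ∀ i, min (c i) (R ctil E i + l) ≥ (1 / (n : ℝ)) * min (c i) E :=
  historical_preserves_securement_general n T c E hc hE0 hEC ch xh hhist ctil hctil R hSec l hl
end

section
/- If a standard rule R is resource monotonic, then the historically induced rule is resource monotonic: for E' > E with E' ≤ ∑ cᵢ, Φᵢ(R)(N,c,E',h) ≥ Φᵢ(R)(N,c,E,h) for every agent i. -/
open Finset

lemma min_add_eq_add_min_sub (c a l : ℝ) : min c (a + l) = a + min (c - a) l := by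
  rw [← min_add_add_left, add_sub_cancel]

lemma min_add_le_min_add_of_sum_eq {ι : Type*} [Fintype ι] {c a a' : ι → ℝ} {l l' : ℝ}
    (ha : a ≤ a')
    (hsum : ∑ i, (min (c i) (a i + l) - a i) = ∑ i, (min (c i) (a' i + l') - a' i)) (i : ι) :
    min (c i) (a i + l) ≤ min (c i) (a' i + l') := by
  rcases le_or_gt l l' with hll' | hl'l
  · exact min_le_min le_rfl (add_le_add (ha i) hll')
  · simp only [min_add_eq_add_min_sub, add_sub_cancel_left] at hsum ⊢
    have htop_le : ∀ j ∈ univ, min (c j - a' j) l' ≤ min (c j - a j) l := fun j _ =>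
      min_le_min (sub_le_sub_left (ha j) _) hl'l.le
    have htop_eq := (sum_eq_sum_iff_of_le htop_le).1 hsum.symm i (mem_univ i)
    rw [htop_eq]
    exact add_le_add (ha i) le_rfl

lemma le_adjusted_claim {ι τ : Type*} [Fintype τ] {c ctil : ι → ℝ} {ch xh : τ → ι → ℝ}
    (hhist : ∀ t i, xh t i ≤ ch t i)
    (hctil : ∀ i, ctil i = c i + ∑ t, (ch t i - xh t i)) (i : ι) :
    c i ≤ ctil i := by
  rw [hctil]
  exact le_add_of_nonneg_right (sum_nonneg fun t _ => sub_nonneg.2 (hhist t i))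

theorem historical_preserves_resource_monotonicity_general
    (n T : ℕ) (c : Fin n → ℝ) (E E' : ℝ)
    (hc : ∀ i, 0 ≤ c i) (hE0 : 0 ≤ E) (hEE' : E < E') (hE'C : E' ≤ ∑ i, c i)
    (ch xh : Fin T → Fin n → ℝ)
    (hhist : ∀ t i, 0 ≤ xh t i ∧ xh t i ≤ ch t i)
    (ctil : Fin n → ℝ)
    (hctil : ∀ i, ctil i = c i + ∑ t, (ch t i - xh t i))
    (R : (Fin n → ℝ) → ℝ → (Fin n → ℝ)) (hR : IsRule n R)
    (hRM : ∀ c' F F', (∀ k, 0 ≤ c' k) → 0 ≤ F → F < F' → F' ≤ ∑ k, c' k →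
      ∀ i, R c' F i ≤ R c' F' i)
    (l l' : ℝ)
    (hsum : ∑ i, min (c i) (R ctil E i + l) = E)
    (hsum' : ∑ i, min (c i) (R ctil E' i + l') = E') :
    ∀ i, min (c i) (R ctil E' i + l') ≥ min (c i) (R ctil E i + l) := by
  have hc_le := le_adjusted_claim (fun t i => (hhist t i).2) hctil
  have hctil_nonneg : ∀ i, 0 ≤ ctil i := fun i => (hc i).trans (hc_le i)
  have hE'ctil : E' ≤ ∑ i, ctil i := hE'C.trans (sum_le_sum fun i _ => hc_le i)
  have hRE := (hR ctil E hctil_nonneg hE0 (hEE'.le.trans hE'ctil)).2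
  have hRE' := (hR ctil E' hctil_nonneg (hE0.trans hEE'.le) hE'ctil).2
  refine min_add_le_min_add_of_sum_eq (hRM ctil E E' hctil_nonneg hE0 hEE' hE'ctil) ?_
  rw [sum_sub_distrib, sum_sub_distrib, hsum, hsum', hRE, hRE', sub_self, sub_self]

theorem historical_preserves_resource_monotonicity
    (n T : ℕ) (c : Fin n → ℝ) (E E' : ℝ)
    (hc : ∀ i, 0 ≤ c i) (hE0 : 0 ≤ E) (hEE' : E < E') (hE'C : E' ≤ ∑ i, c i)
    (ch xh : Fin T → Fin n → ℝ)
    (hhist : ∀ t i, 0 ≤ xh t i ∧ xh t i ≤ ch t i)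
    (ctil : Fin n → ℝ)
    (hctil : ∀ i, ctil i = c i + ∑ t, (ch t i - xh t i))
    (R : (Fin n → ℝ) → ℝ → (Fin n → ℝ)) (hR : IsRule n R)
    (hRM : ∀ c' F F', (∀ k, 0 ≤ c' k) → 0 ≤ F → F < F' → F' ≤ ∑ k, c' k →
      ∀ i, R c' F i ≤ R c' F' i)
    (l l' : ℝ) (hl : 0 ≤ l) (hl' : 0 ≤ l')
    (hsum : ∑ i, min (c i) (R ctil E i + l) = E)
    (hsum' : ∑ i, min (c i) (R ctil E' i + l') = E') :
    ∀ i, min (c i) (R ctil E' i + l') ≥ min (c i) (R ctil E i + l) :=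
  historical_preserves_resource_monotonicity_general n T c E E' hc hE0 hEE' hE'C ch xh hhist ctil
    hctil R hR hRM l l' hsum hsum'
end

section
/- Suppose r, r' ∈ ℝ₊ⁿ with ∑rᵢ = E, ∑r'ᵢ = E', E ≤ E' ≤ ∑cᵢ, and r ≤ r' componentwise. Let λ, λ' ≥ 0 satisfy ∑ᵢ min{cᵢ, rᵢ + λ} = E and ∑ᵢ min{cᵢ, r'ᵢ + λ'} = E'. Then min{cᵢ, rᵢ + λ} ≤ min{cᵢ, r'ᵢ + λ'} for every i. -/
/-!
Subtracting the tentative award turns each truncated share into `min (cᵢ - rᵢ) λ`, which is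
antitone in `rᵢ` and monotone in `λ`; both budget equations say these excesses sum to `0`.
If some final share decreased from `r` to `r'`, the level must have dropped, `λ' < λ`, so every
excess weakly decreases and that one strictly, and the two sums cannot both vanish.
-/

open Finset

section

variable {α : Type*} [AddCommGroup α] [LinearOrder α] [IsOrderedAddMonoid α]

theorem min_add_sub_self (c x l : α) : min c (x + l) - x = min (c - x) l := by
  rw [← min_sub_sub_right, add_sub_cancel_left]

theorem lt_of_min_add_lt_min_add {c x x' l l' : α} (hx : x ≤ x')
    (h : min c (x' + l') < min c (x + l)) : l' < l := by
  have hc : x' + l' < c := by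
    simpa using (min_lt_iff.mp (h.trans_le (min_le_left _ _)))
  rw [min_eq_right hc.le] at h
  refine lt_of_add_lt_add_left (a := x') ?_
  calc x' + l' < x + l := h.trans_le (min_le_right _ _)
    _ ≤ x' + l := add_le_add_left hx l

theorem min_add_le_min_add_of_sum_sub_eq {ι : Type*} [Fintype ι] {c r r' : ι → α} {l l' : α}
    (hrr' : ∀ i, r i ≤ r' i)
    (hsum : ∑ i, (min (c i) (r i + l) - r i) = ∑ i, (min (c i) (r' i + l') - r' i)) (i : ι) :
    min (c i) (r i + l) ≤ min (c i) (r' i + l') := by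
  by_contra! h
  have hl : l' < l := lt_of_min_add_lt_min_add (hrr' i) h
  have hi : min (c i) (r' i + l') - r' i < min (c i) (r i + l) - r i :=
    (sub_lt_sub_right h _).trans_le (sub_le_sub_left (hrr' i) _)
  have hlt : ∑ j, (min (c j) (r' j + l') - r' j) < ∑ j, (min (c j) (r j + l) - r j) := by
    refine sum_lt_sum (fun j _ => ?_) ⟨i, mem_univ i, hi⟩
    rw [min_add_sub_self, min_add_sub_self]
    exact min_le_min (sub_le_sub_left (hrr' j) _) hl.le
  exact hlt.ne' hsum

end

theorem min_truncation_shift_monotone_general (n : ℕ) (c r r' : Fin n → ℝ) (E E' : ℝ)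
    (hrsum : ∑ i, r i = E) (hr'sum : ∑ i, r' i = E')
    (hrr' : ∀ i, r i ≤ r' i)
    (l l' : ℝ)
    (hsum : ∑ i, min (c i) (r i + l) = E)
    (hsum' : ∑ i, min (c i) (r' i + l') = E') :
    ∀ i, min (c i) (r i + l) ≤ min (c i) (r' i + l') :=
  min_add_le_min_add_of_sum_sub_eq hrr' <| by
    rw [sum_sub_distrib, sum_sub_distrib, hsum, hrsum, hsum', hr'sum, sub_self, sub_self]

theorem min_truncation_shift_monotone (n : ℕ) (c r r' : Fin n → ℝ) (E E' : ℝ)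
    (hc : ∀ i, 0 ≤ c i)
    (hr : ∀ i, 0 ≤ r i) (hr' : ∀ i, 0 ≤ r' i)
    (hrsum : ∑ i, r i = E) (hr'sum : ∑ i, r' i = E')
    (hEE' : E ≤ E') (hE'C : E' ≤ ∑ i, c i)
    (hrr' : ∀ i, r i ≤ r' i)
    (l l' : ℝ) (hl : 0 ≤ l) (hl' : 0 ≤ l')
    (hsum : ∑ i, min (c i) (r i + l) = E)
    (hsum' : ∑ i, min (c i) (r' i + l') = E') :
    ∀ i, min (c i) (r i + l) ≤ min (c i) (r' i + l') :=
  min_truncation_shift_monotone_general n c r r' E E' hrsum hr'sum hrr' l l' hsum hsum'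
end

section
/- The historical operator satisfies non-arbitrariness: if Φᵢ(R)(N,c,E,h) = cᵢ and Rᵢ(N,c̃,E) < cᵢ, then for every j with Φⱼ(R)(N,c,E,h) < cⱼ one has Φᵢ(R)(N,c,E,h) − Rᵢ(N,c̃,E) ≤ Φⱼ(R)(N,c,E,h) − Rⱼ(N,c̃,E). -/
theorem min_eq_right_of_min_lt_left {α : Type*} [LinearOrder α] {a b : α} (h : min a b < a) :
    min a b = b :=
  min_eq_right ((min_lt_iff.mp h).resolve_left (lt_irrefl a)).le

theorem historical_operator_non_arbitrariness_general
    (n : ℕ) (c : Fin n → ℝ) (E : ℝ)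
    (ctil : Fin n → ℝ)
    (R : (Fin n → ℝ) → ℝ → (Fin n → ℝ))
    (l : ℝ)
    (i : Fin n)
    (hi : min (c i) (R ctil E i + l) = c i) :
    ∀ j, min (c j) (R ctil E j + l) < c j →
      min (c i) (R ctil E i + l) - R ctil E i ≤
        min (c j) (R ctil E j + l) - R ctil E j := by
  intro j hj
  have hi_gain : c i - R ctil E i ≤ l := sub_le_iff_le_add'.mpr (min_eq_left_iff.mp hi)
  rw [hi, min_eq_right_of_min_lt_left hj, add_sub_cancel_left]
  exact hi_gain

theorem historical_operator_non_arbitrariness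
    (n T : ℕ) (c : Fin n → ℝ) (E : ℝ)
    (hc : ∀ i, 0 ≤ c i) (hE0 : 0 ≤ E) (hEC : E ≤ ∑ i, c i)
    (ch xh : Fin T → Fin n → ℝ)
    (hhist : ∀ t i, 0 ≤ xh t i ∧ xh t i ≤ ch t i)
    (ctil : Fin n → ℝ)
    (hctil : ∀ i, ctil i = c i + ∑ t, (ch t i - xh t i))
    (R : (Fin n → ℝ) → ℝ → (Fin n → ℝ)) (hR : IsRule n R)
    (l : ℝ) (hl : 0 ≤ l)
    (hsum : ∑ i, min (c i) (R ctil E i + l) = E)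
    (i : Fin n)
    (hi : min (c i) (R ctil E i + l) = c i)
    (hRi : R ctil E i < c i) :
    ∀ j, min (c j) (R ctil E j + l) < c j →
      min (c i) (R ctil E i + l) - R ctil E i ≤
        min (c j) (R ctil E j + l) - R ctil E j :=
  historical_operator_non_arbitrariness_general n c E ctil R l i hi
end

section
/- Let r, y ∈ ℝⁿ and c ∈ ℝ₊ⁿ satisfy: ∑ yᵢ = ∑ rᵢ, 0 ≤ yᵢ ≤ cᵢ for all i; (balanced treatment) for all i, j with yᵢ < cᵢ and yⱼ < cⱼ, yᵢ − rᵢ = yⱼ − rⱼ; and (non-arbitrariness) for all i with yᵢ = cᵢ and rᵢ < cᵢ, and all j with yⱼ < cⱼ, yᵢ − rᵢ ≤ yⱼ − rⱼ. Then for every i, if rᵢ ≥ cᵢ then yᵢ = cᵢ (present boundedness). -/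
/-! If some agent `i` with `c i ≤ r i` were left below its claim, every excess `y j - r j` would be
nonpositive: unsaturated agents share agent `i`'s negative excess by balanced treatment, saturated
agents with `r j < c j` have at most that excess by non-arbitrariness, and the remaining saturated
agents have `y j = c j ≤ r j`. Since the excesses sum to zero, agent `i`'s excess would vanish,
forcing `y i = r i ≥ c i`. -/

theorem sub_nonpos_of_unsaturated {ι : Type*} {c r y : ι → ℝ} (hy : ∀ j, y j ≤ c j)
    (hBT : ∀ i j, y i < c i → y j < c j → y i - r i = y j - r j)
    (hNA : ∀ i j, y i = c i → r i < c i → y j < c j → y i - r i ≤ y j - r j)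
    {i : ι} (hi : y i < c i) (hri : c i ≤ r i) (j : ι) : y j - r j ≤ 0 := by
  rcases (hy j).lt_or_eq with hj | hj
  · linarith [hBT i j hi hj]
  · rcases lt_or_ge (r j) (c j) with hrj | hrj
    · linarith [hNA j i hj hrj hi]
    · linarith

theorem bt_na_imply_present_boundedness_general (n : ℕ) (c r y : Fin n → ℝ)
    (hsum : ∑ i, y i = ∑ i, r i)
    (hy : ∀ i, 0 ≤ y i ∧ y i ≤ c i)
    (hBT : ∀ i j, y i < c i → y j < c j → y i - r i = y j - r j)
    (hNA : ∀ i j, y i = c i → r i < c i → y j < c j → y i - r i ≤ y j - r j) :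
    ∀ i, r i ≥ c i → y i = c i := by
  intro i hri
  refine le_antisymm (hy i).2 (not_lt.1 fun hi => ?_)
  have hzero : ∑ j, (y j - r j) = 0 := by rw [Finset.sum_sub_distrib, hsum, sub_self]
  have hexcess_i : y i - r i = 0 :=
    (Finset.sum_eq_zero_iff_of_nonpos fun j _ =>
      sub_nonpos_of_unsaturated (fun j => (hy j).2) hBT hNA hi hri j).1 hzero i (Finset.mem_univ i)
  linarith

theorem bt_na_imply_present_boundedness (n : ℕ) (c r y : Fin n → ℝ)
    (hc : ∀ i, 0 ≤ c i)
    (hsum : ∑ i, y i = ∑ i, r i)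
    (hy : ∀ i, 0 ≤ y i ∧ y i ≤ c i)
    (hBT : ∀ i j, y i < c i → y j < c j → y i - r i = y j - r j)
    (hNA : ∀ i j, y i = c i → r i < c i → y j < c j → y i - r i ≤ y j - r j) :
    ∀ i, r i ≥ c i → y i = c i :=
  bt_na_imply_present_boundedness_general n c r y hsum hy hBT hNA
end

section
/- Let c ∈ ℝ₊ⁿ with 0 ≤ E ≤ ∑cᵢ, r ∈ ℝ₊ⁿ with ∑ rᵢ = E, and y ∈ ℝⁿ with 0 ≤ yᵢ ≤ cᵢ and ∑ yᵢ = E. Suppose y satisfies balanced treatment and non-arbitrariness with respect to r (as defined below). Then yᵢ = min{cᵢ, rᵢ + λ} for every i, where λ ≥ 0 is any value with ∑ᵢ min{cᵢ, rᵢ + λ} = E. In other words, the allocation is uniquely determined by these two axioms and equals the historical-operator allocation. -/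
/-!
Write `h i = min (c i) (r i + λ)`. Both `h` and `y` have total `E`, so it suffices to show
`h ≤ y` pointwise. If `y i < h i` for some `i`, then `h j < y j` for some `j`; so `i` is
unsaturated with `y i - r i < λ`, while `j` is above its reference by `y j - r j > λ ≥ 0`.
The two axioms say exactly that no agent above its reference is ahead of an unsaturated one:
balanced treatment when `j` is unsaturated, non-arbitrariness when `j` is saturated.
-/

open Finset

lemma Finset.exists_lt_of_sum_eq_of_lt {ι M : Type*} [Fintype ι] [AddCommMonoid M]
    [LinearOrder M] [IsOrderedCancelAddMonoid M] {f g : ι → M}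
    (hfg : ∑ k, f k = ∑ k, g k) {i : ι} (hi : f i < g i) : ∃ j, g j < f j := by
  by_contra! hle
  exact (sum_lt_sum (fun k _ => hle k) ⟨i, mem_univ i, hi⟩).ne hfg

section Allocation

variable {ι : Type*} {c r y : ι → ℝ}

lemma sub_le_sub_of_lt_cap (hyc : ∀ i, y i ≤ c i)
    (hBT : ∀ i j, y i < c i → y j < c j → y i - r i = y j - r j)
    (hNA : ∀ i j, y i = c i → r i < c i → y j < c j → y i - r i ≤ y j - r j)
    {i j : ι} (hi : y i < c i) (hj : r j < y j) : y j - r j ≤ y i - r i := by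
  rcases (hyc j).lt_or_eq with hjc | hjc
  · exact (hBT j i hjc hi).le
  · exact hNA j i hjc (hjc ▸ hj) hi

lemma min_add_le_of_sum_eq [Fintype ι] (hyc : ∀ i, y i ≤ c i)
    (hBT : ∀ i j, y i < c i → y j < c j → y i - r i = y j - r j)
    (hNA : ∀ i j, y i = c i → r i < c i → y j < c j → y i - r i ≤ y j - r j)
    {l : ℝ} (hl : 0 ≤ l) (hsum : ∑ k, y k = ∑ k, min (c k) (r k + l)) (i : ι) :
    min (c i) (r i + l) ≤ y i := by
  by_contra! hi
  obtain ⟨j, hj⟩ := exists_lt_of_sum_eq_of_lt hsum hi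
  have hjr : r j + l < y j := by
    rcases min_lt_iff.mp hj with hjc | hjr
    · exact absurd hjc (hyc j).not_gt
    · exact hjr
  have hir : y i < r i + l := hi.trans_le (min_le_right _ _)
  have := sub_le_sub_of_lt_cap hyc hBT hNA (hi.trans_le (min_le_left _ _)) (by linarith)
  linarith

end Allocation

theorem characterization_historical_operator_general (n : ℕ) (c r y : Fin n → ℝ) (E : ℝ)
    (hy : ∀ i, 0 ≤ y i ∧ y i ≤ c i) (hysum : ∑ i, y i = E)
    (hBT : ∀ i j, y i < c i → y j < c j → y i - r i = y j - r j)
    (hNA : ∀ i j, y i = c i → r i < c i → y j < c j → y i - r i ≤ y j - r j) :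
    ∀ l : ℝ, 0 ≤ l → (∑ i, min (c i) (r i + l) = E) →
      ∀ i, y i = min (c i) (r i + l) := by
  intro l hl hsum i
  have hsum' : ∑ k, y k = ∑ k, min (c k) (r k + l) := hysum.trans hsum.symm
  have hle := min_add_le_of_sum_eq (fun k => (hy k).2) hBT hNA hl hsum'
  exact ((sum_eq_sum_iff_of_le fun k _ => hle k).mp hsum'.symm i (mem_univ i)).symm

theorem characterization_historical_operator (n : ℕ) (c r y : Fin n → ℝ) (E : ℝ)
    (hc : ∀ i, 0 ≤ c i) (hE0 : 0 ≤ E) (hEC : E ≤ ∑ i, c i)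
    (hr : ∀ i, 0 ≤ r i) (hrsum : ∑ i, r i = E)
    (hy : ∀ i, 0 ≤ y i ∧ y i ≤ c i) (hysum : ∑ i, y i = E)
    (hBT : ∀ i j, y i < c i → y j < c j → y i - r i = y j - r j)
    (hNA : ∀ i j, y i = c i → r i < c i → y j < c j → y i - r i ≤ y j - r j) :
    ∀ l : ℝ, 0 ≤ l → (∑ i, min (c i) (r i + l) = E) →
      ∀ i, y i = min (c i) (r i + l) :=
  characterization_historical_operator_general n c r y E hy hysum hBT hNA
end

section
/- If y satisfies the hypotheses of the characterization (boundedness, balance, balanced treatment, non-arbitrariness w.r.t. r), then for every agent j with yⱼ < cⱼ one has yⱼ = rⱼ + (∑_{i: yᵢ = cᵢ} (rᵢ − cᵢ))/|{i : yᵢ < cᵢ}|. -/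
open Finset

section Rationing

variable {ι : Type*} [Fintype ι] {c r y : ι → ℝ}

lemma filter_eq_eq_filter_not_lt (hy : ∀ i, y i ≤ c i) :
    univ.filter (fun i => y i = c i) = univ.filter (fun i => ¬ y i < c i) :=
  filter_congr fun i _ => by rw [(hy i).lt_iff_ne, not_not]

/-- The shifts `y i - r i` sum to zero: capped agents contribute `c i - r i`, uncapped ones the
common shift. -/
lemma card_mul_shift_eq_sum_capped (hy : ∀ i, y i ≤ c i) (hsum : ∑ i, y i = ∑ i, r i)
    (hBT : ∀ i j, y i < c i → y j < c j → y i - r i = y j - r j) {j : ι} (hj : y j < c j) :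
    ((univ.filter fun i => y i < c i).card : ℝ) * (y j - r j) =
      ∑ i ∈ univ.filter (fun i => y i = c i), (r i - c i) := by
  have hzero : ∑ i, (y i - r i) = 0 := by rw [sum_sub_distrib, hsum, sub_self]
  have huncapped : ∑ i ∈ univ.filter (fun i => y i < c i), (y i - r i) =
      ((univ.filter fun i => y i < c i).card : ℝ) * (y j - r j) := by
    rw [sum_congr rfl fun i hi => hBT i j (mem_filter.mp hi).2 hj, sum_const, nsmul_eq_mul]
  have hcapped : ∑ i ∈ univ.filter (fun i => y i = c i), (y i - r i) =
      -∑ i ∈ univ.filter (fun i => y i = c i), (r i - c i) := by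
    rw [← sum_neg_distrib]
    exact sum_congr rfl fun i hi => by rw [(mem_filter.mp hi).2]; ring
  rw [← sum_filter_add_sum_filter_not univ (fun i => y i < c i), huncapped,
    ← filter_eq_eq_filter_not_lt hy, hcapped] at hzero
  linarith

end Rationing

theorem characterization_rationed_formula_general (n : ℕ) (c r y : Fin n → ℝ) (E : ℝ)
    (hrsum : ∑ i, r i = E)
    (hy : ∀ i, 0 ≤ y i ∧ y i ≤ c i) (hysum : ∑ i, y i = E)
    (hBT : ∀ i j, y i < c i → y j < c j → y i - r i = y j - r j) :
    ∀ j, y j < c j →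
      y j = r j + (∑ i ∈ univ.filter (fun i => y i = c i), (r i - c i)) /
        ((univ.filter (fun i => y i < c i)).card : ℝ) := by
  intro j hj
  have hcard : ((univ.filter fun i => y i < c i).card : ℝ) ≠ 0 :=
    Nat.cast_ne_zero.mpr (card_pos.mpr ⟨j, mem_filter.mpr ⟨mem_univ j, hj⟩⟩).ne'
  rw [← card_mul_shift_eq_sum_capped (fun i => (hy i).2) (hysum.trans hrsum.symm) hBT hj,
    mul_div_cancel_left₀ _ hcard]
  ring

theorem characterization_rationed_formula (n : ℕ) (c r y : Fin n → ℝ) (E : ℝ)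
    (hc : ∀ i, 0 ≤ c i) (hE0 : 0 ≤ E) (hEC : E ≤ ∑ i, c i)
    (hr : ∀ i, 0 ≤ r i) (hrsum : ∑ i, r i = E)
    (hy : ∀ i, 0 ≤ y i ∧ y i ≤ c i) (hysum : ∑ i, y i = E)
    (hBT : ∀ i j, y i < c i → y j < c j → y i - r i = y j - r j)
    (hNA : ∀ i j, y i = c i → r i < c i → y j < c j → y i - r i ≤ y j - r j)
    (hne : (univ.filter (fun i => y i < c i)).Nonempty) :
    ∀ j, y j < c j →
      y j = r j + (∑ i ∈ univ.filter (fun i => y i = c i), (r i - c i)) /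
        ((univ.filter (fun i => y i < c i)).card : ℝ) :=
  characterization_rationed_formula_general n c r y E hrsum hy hysum hBT
end
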